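/- For any commutative ring A, let nil_∞(A) = ⋂_{p ∈ Spec A} ⋂_{n ∈ ℕ} pⁿ. Then the quotient ring A/nil_∞(A) is decent, i.e. nil_∞(A/nil_∞(A)) = (0). -/
import Mathlib


/-- `nil_∞(A) = ⋂_{p ∈ Spec A} ⋂_{n} pⁿ`. -/
def nilInfty (A : Type*) [CommRing A] : Ideal A :=
  ⨅ (p : Ideal A) (_ : p.IsPrime) (n : ℕ), p ^ n

/-- The quotient `A / nil_∞(A)` is decent: `nil_∞(A / nil_∞(A)) = (0)`. -/
theorem nilInfty_quotient (A : Type*) [CommRing A] :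
    nilInfty (A ⧸ nilInfty A) = ⊥ := by
  set I := nilInfty A with hI
  have hsurj : Function.Surjective (Ideal.Quotient.mk I) := Ideal.Quotient.mk_surjective
  refine le_antisymm ?_ bot_le
  intro x hx
  obtain ⟨y, rfl⟩ := hsurj x
  rw [Ideal.mem_bot, Ideal.Quotient.eq_zero_iff_mem]
  have hy : y ∈ I := by
    rw [hI, nilInfty]
    simp only [Ideal.mem_iInf]
    intro p hp n
    have hker : RingHom.ker (Ideal.Quotient.mk I) = I := Ideal.mk_ker
    have hIpn : I ≤ p ^ n := by
      intro a ha
      rw [hI, nilInfty] at ha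
      simp only [Ideal.mem_iInf] at ha
      exact ha p hp n
    have hIp : I ≤ p := by
      have := hIpn
      calc I ≤ p ^ 1 := by
              intro a ha
              rw [hI, nilInfty] at ha
              simp only [Ideal.mem_iInf] at ha
              exact ha p hp 1
           _ = p := pow_one p
    have hprime : (p.map (Ideal.Quotient.mk I)).IsPrime :=
      Ideal.map_isPrime_of_surjective hsurj (by rw [hker]; exact hIp)
    have hx' : (Ideal.Quotient.mk I) y ∈ (p.map (Ideal.Quotient.mk I)) ^ n := by
      rw [nilInfty] at hx
      simp only [Ideal.mem_iInf] at hx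
      exact hx _ hprime n
    rw [← Ideal.map_pow] at hx'
    have : y ∈ Ideal.comap (Ideal.Quotient.mk I) (Ideal.map (Ideal.Quotient.mk I) (p ^ n)) :=
      hx'
    rw [Ideal.comap_map_of_surjective _ hsurj, ← RingHom.ker_eq_comap_bot, hker, sup_eq_left.mpr hIpn] at this
    exact this
  exact hy
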